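/- Let P₀, P₁ be Borel probability measures on ℝ^m and let F = { f : f(z) = aᵀz + b, a ∈ ℝ^m, b ∈ ℝ } be the class of affine prediction models. If d_sig(P₀,P₁) < ε for some ε > 0, then there exists a constant c > 0 not depending on ε such that sup over f ∈ F and τ ∈ ℝ of |P₀{z : f(z) > τ} − P₁{z : f(z) > τ}| < c·ε. -/

import Mathlib

/-!
The indicator of the half-space `{f > τ}` is the pointwise limit of `σ(n²(f - τ) - n)`, a sigmoid
of an affine function; the shift `- n` sends the boundary `f = τ`, where `σ(n² · 0) = 1/2`, to `0`.
By dominated convergence each demographic-parity gap is therefore a limit of differences bounded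
by `d_sig(P₀, P₁)`, so it is at most `d_sig(P₀, P₁) < ε`, and `c = 1` works.
-/

open MeasureTheory

/-- The sigmoid function `σ(t) = 1/(1 + e^{-t})`. -/
noncomputable def sigmoid (t : ℝ) : ℝ := 1 / (1 + Real.exp (-t))

/-- The sigmoid IPM between two measures on `ℝ^m`. -/
noncomputable def sigmoidIPM {m : ℕ} (P₀ P₁ : Measure (Fin m → ℝ)) : ℝ :=
  ⨆ p : (Fin m → ℝ) × ℝ,
    |(∫ z, sigmoid ((∑ i, p.1 i * z i) + p.2) ∂P₀) -
      ∫ z, sigmoid ((∑ i, p.1 i * z i) + p.2) ∂P₁|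

open Filter Topology

lemma sigmoid_eq_real_sigmoid : sigmoid = Real.sigmoid := funext fun _ => one_div _

lemma tendsto_sigmoid_sq_mul_sub_self (c : ℝ) :
    Tendsto (fun n : ℕ => sigmoid ((n : ℝ) ^ 2 * c - n)) atTop
      (𝓝 ((Set.Ioi 0).indicator 1 c)) := by
  rw [sigmoid_eq_real_sigmoid]
  rcases lt_or_ge 0 c with hc | hc
  · rw [Set.indicator_of_mem (Set.mem_Ioi.2 hc), Pi.one_apply]
    have h : Tendsto (fun n : ℕ => (n : ℝ) * ((n : ℝ) * c - 1)) atTop atTop :=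
      tendsto_natCast_atTop_atTop.atTop_mul_atTop₀
        (tendsto_atTop_add_const_right _ _ (tendsto_natCast_atTop_atTop.atTop_mul_const hc))
    refine Real.tendsto_sigmoid_atTop.comp (h.congr fun n => ?_)
    ring
  · rw [Set.indicator_of_notMem (Set.notMem_Ioi.2 hc)]
    refine Real.tendsto_sigmoid_atBot.comp (tendsto_atBot_mono (fun n => ?_)
      (tendsto_neg_atTop_atBot.comp tendsto_natCast_atTop_atTop))
    have : (n : ℝ) ^ 2 * c ≤ 0 := mul_nonpos_of_nonneg_of_nonpos (sq_nonneg _) hc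
    simp only [Function.comp_apply]
    linarith

lemma tendsto_integral_sigmoid_sq_mul_sub_self {α : Type*} [MeasurableSpace α] (μ : Measure α)
    [IsFiniteMeasure μ] {g : α → ℝ} (hg : Measurable g) :
    Tendsto (fun n : ℕ => ∫ x, sigmoid ((n : ℝ) ^ 2 * g x - n) ∂μ) atTop
      (𝓝 (μ.real {x | 0 < g x})) := by
  rw [← integral_indicator_one (measurableSet_lt measurable_const hg)]
  refine tendsto_integral_of_dominated_convergence (fun _ => 1) (fun n => ?_)
    (integrable_const 1) (fun n => ae_of_all _ fun x => ?_)
    (ae_of_all _ fun x => tendsto_sigmoid_sq_mul_sub_self (g x))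
  · rw [sigmoid_eq_real_sigmoid]
    exact (continuous_sigmoid.measurable.comp
      ((hg.const_mul _).sub measurable_const)).aestronglyMeasurable
  · rw [sigmoid_eq_real_sigmoid, Real.norm_of_nonneg (Real.sigmoid_nonneg _)]
    exact Real.sigmoid_le_one _

lemma integral_sigmoid_mem_Icc {α : Type*} [MeasurableSpace α] (μ : Measure α)
    [IsProbabilityMeasure μ] (f : α → ℝ) : ∫ x, sigmoid (f x) ∂μ ∈ Set.Icc 0 1 := by
  rw [sigmoid_eq_real_sigmoid]
  refine ⟨integral_nonneg fun x => Real.sigmoid_nonneg _, ?_⟩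
  refine (le_abs_self _).trans ?_
  simpa using norm_integral_le_of_norm_le_const (μ := μ) (C := 1) (ae_of_all _ fun x =>
    (Real.norm_of_nonneg (Real.sigmoid_nonneg (f x))).trans_le (Real.sigmoid_le_one _))

lemma abs_integral_sigmoid_sub_le_sigmoidIPM {m : ℕ} (P₀ P₁ : Measure (Fin m → ℝ))
    [IsProbabilityMeasure P₀] [IsProbabilityMeasure P₁] (θ : Fin m → ℝ) (μ : ℝ) :
    |(∫ z, sigmoid ((∑ i, θ i * z i) + μ) ∂P₀) - ∫ z, sigmoid ((∑ i, θ i * z i) + μ) ∂P₁| ≤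
      sigmoidIPM P₀ P₁ := by
  refine le_ciSup (f := fun p : (Fin m → ℝ) × ℝ => |(∫ z, sigmoid ((∑ i, p.1 i * z i) + p.2) ∂P₀) -
    ∫ z, sigmoid ((∑ i, p.1 i * z i) + p.2) ∂P₁|) ⟨1, ?_⟩ (θ, μ)
  rintro _ ⟨p, rfl⟩
  obtain ⟨h₀, h₀'⟩ := integral_sigmoid_mem_Icc P₀ fun z => (∑ i, p.1 i * z i) + p.2
  obtain ⟨h₁, h₁'⟩ := integral_sigmoid_mem_Icc P₁ fun z => (∑ i, p.1 i * z i) + p.2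
  exact (abs_sub_le_of_le_of_le h₀ h₀' h₁ h₁').trans_eq (sub_zero 1)

lemma abs_measureReal_sub_le_sigmoidIPM {m : ℕ} (P₀ P₁ : Measure (Fin m → ℝ))
    [IsProbabilityMeasure P₀] [IsProbabilityMeasure P₁] (a : Fin m → ℝ) (b τ : ℝ) :
    |P₀.real {z | τ < (∑ i, a i * z i) + b} - P₁.real {z | τ < (∑ i, a i * z i) + b}| ≤
      sigmoidIPM P₀ P₁ := by
  have hg : Measurable fun z : Fin m → ℝ => (∑ i, a i * z i) + b - τ := by fun_prop
  have h₀ := tendsto_integral_sigmoid_sq_mul_sub_self P₀ hg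
  have h₁ := tendsto_integral_sigmoid_sq_mul_sub_self P₁ hg
  simp only [sub_pos] at h₀ h₁
  refine le_of_tendsto' (h₀.sub h₁).abs fun n => ?_
  have h_affine : ∀ z : Fin m → ℝ, (n : ℝ) ^ 2 * ((∑ i, a i * z i) + b - τ) - n =
      (∑ i, (n : ℝ) ^ 2 * a i * z i) + ((n : ℝ) ^ 2 * (b - τ) - n) := fun z => by
    simp only [mul_assoc, ← Finset.mul_sum]
    ring
  simp only [h_affine]
  exact abs_integral_sigmoid_sub_le_sigmoidIPM P₀ P₁ _ _

/-- for affine prediction models `f(z) = aᵀz + b`, there is a constant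
`c > 0` not depending on `ε` such that whenever `d_sig(P₀,P₁) < ε`, all thresholded
demographic-parity gaps are small:
`sup_{f affine, τ} |P₀{z : f(z) > τ} - P₁{z : f(z) > τ}| < c·ε`. -/
theorem linear_classifier_DP_bound {m : ℕ} :
    ∃ c : ℝ, 0 < c ∧
      ∀ (P₀ P₁ : Measure (Fin m → ℝ)),
        IsProbabilityMeasure P₀ → IsProbabilityMeasure P₁ →
        ∀ ε : ℝ, 0 < ε → sigmoidIPM P₀ P₁ < ε →
          ∀ (a : Fin m → ℝ) (b τ : ℝ),
            |(P₀ {z | τ < (∑ i, a i * z i) + b}).toReal -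
              (P₁ {z | τ < (∑ i, a i * z i) + b}).toReal| < c * ε := by
  refine ⟨1, one_pos, fun P₀ P₁ _ _ ε _ hIPM a b τ => ?_⟩
  rw [one_mul]
  exact (abs_measureReal_sub_le_sigmoidIPM P₀ P₁ a b τ).trans_lt hIPM
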